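/- arXiv:1010.5716 — 2 statements merged into one kernel-verified Lean document; each statement's English description precedes it below -/
import Mathlib

section
/- Let G = (A ∪ B, E) be a bipartite graph with |A| = n and |B| = m containing no complete bipartite subgraph K_{r,s} with the r vertices in A and the s vertices in B. Then |E| ≤ (s-1)^{1/r} · n · m^{1-1/r} + (r-1)·m. -/
/-!
Count the pairs `(R, b)` with `b ∈ B` and `R` an `r`-subset of the neighbourhood `N(b) ⊆ A`.
Each `r`-subset `R ⊆ A` has fewer than `s` common neighbours, so
`∑_b C(d(b), r) ≤ (s - 1) C(n, r)`. Since `(d - r + 1)^r ≤ r! C(d, r)` and `r! C(n, r) ≤ n^r`,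
this gives `∑_b (d(b) - r + 1)^r ≤ (s - 1) n^r`, and the power-mean inequality over the `m`
vertices of `B` turns it into `∑_b (d(b) - r + 1) ≤ (s - 1)^(1/r) n m^(1 - 1/r)`.
-/

open Finset

section

variable {α β ι : Type*}

namespace Finset

theorem card_eq_sum_card_bipartiteBelow [DecidableEq α] [DecidableEq β]
    {A : Finset α} {B : Finset β} {E : Finset (α × β)} (hE : ∀ e ∈ E, e.1 ∈ A ∧ e.2 ∈ B) :
    #E = ∑ b ∈ B, #(A.bipartiteBelow (fun a b => (a, b) ∈ E) b) := by
  have hEAB : {e ∈ A ×ˢ B | e ∈ E} = E := by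
    ext e
    simpa [mem_product] using fun he => hE e he
  calc #E = #{e ∈ A ×ˢ B | e ∈ E} := by rw [hEAB]
    _ = _ := by simp only [card_filter, sum_product_right, bipartiteBelow]

variable (G : α → β → Prop) [∀ a b, Decidable (G a b)] (A : Finset α) (B : Finset β)

theorem sum_choose_card_bipartiteBelow (r : ℕ) :
    ∑ b ∈ B, (#(A.bipartiteBelow G b)).choose r =
      ∑ R ∈ A.powersetCard r, #{b ∈ B | ∀ a ∈ R, G a b} := by
  refine (sum_congr rfl fun b _ => ?_).trans
    (sum_card_bipartiteAbove_eq_sum_card_bipartiteBelow (r := fun R b => ∀ a ∈ R, G a b)).symm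
  rw [← card_powersetCard]
  congr 1
  ext R
  simp only [bipartiteBelow, mem_filter, mem_powersetCard, subset_iff]
  grind

theorem card_filter_forall_lt_of_not_exists {r s : ℕ}
    (hfree : ¬ ∃ (R : Finset α) (S : Finset β), R ⊆ A ∧ S ⊆ B ∧ #R = r ∧ #S = s ∧
      ∀ a ∈ R, ∀ b ∈ S, G a b)
    {R : Finset α} (hR : R ∈ A.powersetCard r) : #{b ∈ B | ∀ a ∈ R, G a b} < s := by
  by_contra! hs
  obtain ⟨S, hSsub, hScard⟩ := exists_subset_card_eq hs
  rw [mem_powersetCard] at hR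
  exact hfree ⟨R, S, hR.1, hSsub.trans (filter_subset _ _), hR.2, hScard,
    fun a ha b hb => (mem_filter.mp (hSsub hb)).2 a ha⟩

end Finset

theorem sum_pow_sub_le_of_sum_choose_le {s : Finset ι} {f : ι → ℕ} {r t n : ℕ}
    (h : ∑ i ∈ s, (f i).choose r ≤ t * n.choose r) :
    ∑ i ∈ s, (f i + 1 - r) ^ r ≤ t * n ^ r :=
  calc ∑ i ∈ s, (f i + 1 - r) ^ r
      ≤ ∑ i ∈ s, r.factorial * (f i).choose r := by
        gcongr with i
        rw [← Nat.descFactorial_eq_factorial_mul_choose]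
        exact Nat.pow_sub_le_descFactorial _ _
    _ = r.factorial * ∑ i ∈ s, (f i).choose r := (mul_sum _ _ _).symm
    _ ≤ r.factorial * (t * n.choose r) := Nat.mul_le_mul_left _ h
    _ = t * (r.factorial * n.choose r) := Nat.mul_left_comm _ _ _
    _ ≤ t * n ^ r := by
        rw [← Nat.descFactorial_eq_factorial_mul_choose]
        exact Nat.mul_le_mul_left _ (Nat.descFactorial_le_pow _ _)

theorem Real.sum_le_of_sum_pow_le {s : Finset ι} {x : ι → ℝ} (hx : ∀ i ∈ s, 0 ≤ x i)
    {r : ℕ} (hr : 1 ≤ r) {C N : ℝ} (hC : 0 ≤ C) (hN : 0 ≤ N)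
    (h : ∑ i ∈ s, x i ^ r ≤ C * N ^ r) :
    ∑ i ∈ s, x i ≤ C ^ ((1 : ℝ) / r) * N * (#s : ℝ) ^ (1 - (1 : ℝ) / r) := by
  have hr₀ : (0 : ℝ) < r := Nat.cast_pos.mpr hr
  have hr₁ : (1 : ℝ) / r * r = 1 := one_div_mul_cancel hr₀.ne'
  rw [← Real.rpow_le_rpow_iff (sum_nonneg hx) (by positivity) hr₀]
  calc (∑ i ∈ s, x i) ^ (r : ℝ)
      ≤ (#s : ℝ) ^ ((r : ℝ) - 1) * ∑ i ∈ s, x i ^ (r : ℝ) :=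
        Real.rpow_sum_le_const_mul_sum_rpow_of_nonneg s (by exact_mod_cast hr) hx
    _ ≤ (#s : ℝ) ^ ((r : ℝ) - 1) * (C * N ^ r) := by
        simp only [Real.rpow_natCast]; gcongr
    _ = (C ^ ((1 : ℝ) / r) * N * (#s : ℝ) ^ (1 - (1 : ℝ) / r)) ^ (r : ℝ) := by
        rw [Real.mul_rpow (by positivity) (by positivity), Real.mul_rpow (by positivity) hN,
          ← Real.rpow_mul hC, ← Real.rpow_mul (by positivity), hr₁, sub_mul, hr₁, one_mul,
          Real.rpow_one, Real.rpow_natCast]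
        ring

end

/-- Kővári–Sós–Turán: a bipartite graph with parts `A` (size `n`) and `B` (size `m`)
with no `K_{r,s}` (the `r` vertices in `A`, the `s` vertices in `B`) has at most
`(s-1)^(1/r) * n * m^(1-1/r) + (r-1) * m` edges. -/
theorem kovari_sos_turan {α β : Type*} [DecidableEq α] [DecidableEq β]
    (A : Finset α) (B : Finset β) (E : Finset (α × β)) (n m r s : ℕ)
    (hA : A.card = n) (hB : B.card = m)
    (hE : ∀ e ∈ E, e.1 ∈ A ∧ e.2 ∈ B)
    (hr : 1 ≤ r) (hs : 1 ≤ s)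
    (hKrs : ¬ ∃ (R : Finset α) (S : Finset β), R ⊆ A ∧ S ⊆ B ∧ R.card = r ∧ S.card = s ∧
      ∀ a ∈ R, ∀ b ∈ S, (a, b) ∈ E) :
    (E.card : ℝ) ≤ ((s : ℝ) - 1) ^ ((1 : ℝ) / r) * n * (m : ℝ) ^ (1 - (1 : ℝ) / r)
      + ((r : ℝ) - 1) * m := by
  set d : β → ℕ := fun b => #(A.bipartiteBelow (fun a b => (a, b) ∈ E) b)
  have hchoose : ∑ b ∈ B, (d b).choose r ≤ (s - 1) * n.choose r := by
    rw [sum_choose_card_bipartiteBelow, ← hA, ← card_powersetCard, mul_comm]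
    exact sum_le_card_nsmul _ _ _ fun R hR =>
      Nat.le_sub_one_of_lt (card_filter_forall_lt_of_not_exists _ A B hKrs hR)
  have hpow : ∑ b ∈ B, ((d b + 1 - r : ℕ) : ℝ) ^ r ≤ ((s : ℝ) - 1) * n ^ r := by
    rw [← Nat.cast_pred hs]
    exact_mod_cast sum_pow_sub_le_of_sum_choose_le hchoose
  have hroot := Real.sum_le_of_sum_pow_le (fun b _ => Nat.cast_nonneg _) hr
    (by simpa using hs) n.cast_nonneg hpow
  rw [hB] at hroot
  calc (#E : ℝ) = ∑ b ∈ B, (d b : ℝ) := by rw [card_eq_sum_card_bipartiteBelow hE, Nat.cast_sum]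
    _ ≤ ∑ b ∈ B, (((d b + 1 - r : ℕ) : ℝ) + ((r : ℝ) - 1)) := by
        gcongr with b
        rw [← Nat.cast_pred hr]
        exact_mod_cast (by omega : d b ≤ d b + 1 - r + (r - 1))
    _ = ∑ b ∈ B, ((d b + 1 - r : ℕ) : ℝ) + ((r : ℝ) - 1) * m := by
        rw [sum_add_distrib, sum_const, hB, nsmul_eq_mul, mul_comm]
    _ ≤ _ := by gcongr
end

section
/- Let x_1, ..., x_k, y_1, ..., y_k, z_1, ..., z_k be 3k points in convex position in the plane appearing in this clockwise order on their convex hull. Then the k triangles T_i = conv{x_i, y_i, z_i} (i = 1, ..., k) have a common point. -/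
/-!
Each triangle `T_i` is the intersection of the closed half-planes to the right of its three
edges, and these `3k` edges are exactly the chords from vertex `a` to vertex `a + k` (indices
mod `3k`). The half-plane of such a chord contains every vertex except the `k - 1` lying strictly
inside its arc, so any three of the half-planes miss at most `3k - 3` vertices and hence share a
vertex. By Helly's theorem in the plane all `3k` half-planes share a point, which then lies in
every `T_i`.
-/

open Finset

/-- Twice the signed area of the triangle `u v p`; negative iff `u, v, p` is clockwise. -/
def cross (u v p : ℝ × ℝ) : ℝ := (v.1 - u.1) * (p.2 - u.2) - (v.2 - u.2) * (p.1 - u.1)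

lemma cross_rotate (u v p : ℝ × ℝ) : cross u v p = cross v p u := by
  unfold cross; ring

@[simp] lemma cross_self_left (u v : ℝ × ℝ) : cross u v u = 0 := by
  unfold cross; ring

@[simp] lemma cross_self_right (u v : ℝ × ℝ) : cross u v v = 0 := by
  unfold cross; ring

lemma cross_smul_add_smul (u v x y : ℝ × ℝ) {a b : ℝ} (hab : a + b = 1) :
    cross u v (a • x + b • y) = a * cross u v x + b * cross u v y := by
  obtain rfl : b = 1 - a := by linarith
  simp only [cross, Prod.fst_add, Prod.snd_add, Prod.smul_fst, Prod.smul_snd, smul_eq_mul]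
  ring

lemma convex_setOf_cross_nonpos (u v : ℝ × ℝ) : Convex ℝ {p | cross u v p ≤ 0} := by
  intro x hx y hy a b ha hb hab
  simp only [Set.mem_ofPred_eq, cross_smul_add_smul u v x y hab] at hx hy ⊢
  linarith [mul_nonpos_of_nonneg_of_nonpos ha hx, mul_nonpos_of_nonneg_of_nonpos hb hy]

lemma centerMass_cross_eq (A B C p : ℝ × ℝ) (h : cross A B C ≠ 0) :
    (univ : Finset (Fin 3)).centerMass ![cross B C p, cross C A p, cross A B p] ![A, B, C] = p := by
  have hsum : cross B C p + cross C A p + cross A B p = cross A B C := by unfold cross; ring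
  simp only [centerMass, Fin.sum_univ_three, Matrix.cons_val_zero, Matrix.cons_val_one,
    Matrix.cons_val_two, Matrix.head_cons, Matrix.tail_cons, hsum]
  unfold cross at h ⊢
  ext <;> simp only [Prod.smul_fst, Prod.smul_snd, Prod.fst_add, Prod.snd_add, smul_eq_mul] <;>
    field_simp <;> ring

lemma mem_convexHull_of_cross_nonpos {A B C p : ℝ × ℝ} (hABC : cross A B C < 0)
    (hA : cross B C p ≤ 0) (hB : cross C A p ≤ 0) (hC : cross A B p ≤ 0) :
    p ∈ convexHull ℝ {A, B, C} := by
  have hsum : cross B C p + cross C A p + cross A B p = cross A B C := by unfold cross; ring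
  rw [← centerMass_cross_eq A B C p hABC.ne, ← centerMass_neg_left]
  apply centerMass_mem_convexHull
  · intro i _; fin_cases i <;> simp [hA, hB, hC]
  · simp only [Fin.sum_univ_three, Pi.neg_apply, Matrix.cons_val_zero, Matrix.cons_val_one,
      Matrix.cons_val_two, Matrix.head_cons, Matrix.tail_cons]
    linarith
  · intro i _; fin_cases i <;> simp

def IsClockwise {n : ℕ} (w : Fin n → ℝ × ℝ) : Prop :=
  ∀ i j l, i < j → j < l → cross (w i) (w j) (w l) < 0

section Arc

variable {n : ℕ}

/-- The indices met strictly between `a` and `b` when walking forward cyclically from `a`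
(subtraction in `Fin n` wraps around). -/
def openArc (a b : Fin n) : Finset (Fin n) :=
  {m | 0 < (m - a).val ∧ (m - a).val < (b - a).val}

lemma Fin.val_sub_eq_or (x y : Fin n) : y.val ≤ x.val ∧ (x - y).val = x.val - y.val ∨
    x.val < y.val ∧ (x - y).val = n + x.val - y.val := by
  rcases le_or_gt y x with h | h
  · exact .inl ⟨h, Fin.coe_sub_iff_le.mpr h⟩
  · exact .inr ⟨h, Fin.coe_sub_iff_lt.mpr h⟩

lemma card_openArc_le [NeZero n] (a b : Fin n) : #(openArc a b) ≤ (b - a).val - 1 := by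
  calc #(openArc a b) ≤ #(Ioo 0 (b - a).val) := by
        refine card_le_card_of_injOn (fun m => (m - a).val) (fun m hm => ?_) ?_
        · simpa [openArc] using hm
        · intro x _ y _ h
          simpa using Fin.ext h
    _ = (b - a).val - 1 := by simp

end Arc

namespace IsClockwise

variable {n : ℕ} {w : Fin n → ℝ × ℝ}

lemma cross_neg_of_cyclic (hw : IsClockwise w) {i j l : Fin n}
    (h : i < j ∧ j < l ∨ j < l ∧ l < i ∨ l < i ∧ i < j) : cross (w i) (w j) (w l) < 0 := by
  rcases h with ⟨hij, hjl⟩ | ⟨hjl, hli⟩ | ⟨hli, hij⟩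
  · exact hw i j l hij hjl
  · rw [cross_rotate]; exact hw j l i hjl hli
  · rw [← cross_rotate]; exact hw l i j hli hij

lemma cross_nonpos_of_notMem_openArc (hw : IsClockwise w) {a b m : Fin n}
    (hm : m ∉ openArc a b) : cross (w a) (w b) (w m) ≤ 0 := by
  by_cases hab : a = b
  · simp [hab, cross]
  by_cases hma : m = a
  · simp [hma]
  by_cases hmb : m = b
  · simp [hmb]
  refine (hw.cross_neg_of_cyclic ?_).le
  simp only [openArc, mem_filter, mem_univ, true_and, not_and, not_lt] at hm
  rw [Fin.ext_iff] at hab hma hmb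
  simp only [Fin.lt_def]
  rcases Fin.val_sub_eq_or m a with ⟨h₁, h₁'⟩ | ⟨h₁, h₁'⟩ <;>
  rcases Fin.val_sub_eq_or b a with ⟨h₂, h₂'⟩ | ⟨h₂, h₂'⟩ <;> omega

end IsClockwise

lemma exists_forall_notMem_of_sum_card_lt {ι α : Type*} [Fintype α] [DecidableEq α]
    (I : Finset ι) (f : ι → Finset α) (h : ∑ i ∈ I, #(f i) < Fintype.card α) :
    ∃ m, ∀ i ∈ I, m ∉ f i := by
  by_contra! hcover
  have : univ ⊆ I.biUnion f := fun m _ => by simpa using hcover m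
  have := (card_le_card this).trans card_biUnion_le
  rw [card_univ] at this
  omega

/-- If `3k` points `w 0, …, w (3k−1)` appear in clockwise convex position (every triple
in listed order is oriented clockwise), then the `k` triangles
`conv{w i, w (k+i), w (2k+i)}` have a common point. -/
theorem convex_position_triangles_intersect (k : ℕ) (hk : 0 < k)
    (w : Fin (3 * k) → ℝ × ℝ)
    (hcw : ∀ i j l : Fin (3 * k), i < j → j < l →
      ((w j).1 - (w i).1) * ((w l).2 - (w i).2)
        - ((w j).2 - (w i).2) * ((w l).1 - (w i).1) < 0) :
    ∃ p : ℝ × ℝ, ∀ i : Fin k,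
      p ∈ convexHull ℝ ({w ⟨i.1, by omega⟩, w ⟨k + i.1, by omega⟩,
        w ⟨2 * k + i.1, by omega⟩} : Set (ℝ × ℝ)) := by
  have hw : IsClockwise w := hcw
  have : NeZero (3 * k) := ⟨by omega⟩
  let K : Fin (3 * k) := ⟨k, by omega⟩
  let H : Fin (3 * k) → Set (ℝ × ℝ) := fun a => {p | cross (w a) (w (a + K)) p ≤ 0}
  have h_inter (I : Finset (Fin (3 * k))) (hI : #I ≤ 3) : (⋂ a ∈ I, H a).Nonempty := by
    obtain ⟨m, hm⟩ := exists_forall_notMem_of_sum_card_lt I (fun a => openArc a (a + K)) <|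
      calc ∑ a ∈ I, #(openArc a (a + K)) ≤ #I • (k - 1) :=
            sum_le_card_nsmul _ _ _ fun a _ => (card_openArc_le a (a + K)).trans_eq (by simp [K])
        _ ≤ 3 * (k - 1) := Nat.mul_le_mul_right _ hI
        _ < Fintype.card (Fin (3 * k)) := by rw [Fintype.card_fin]; omega
    exact ⟨w m, Set.mem_iInter₂.2 fun a ha => hw.cross_nonpos_of_notMem_openArc (hm a ha)⟩
  obtain ⟨p, hp⟩ := Convex.helly_theorem' (s := univ) (fun a _ => convex_setOf_cross_nonpos _ _)
    fun I _ hI => h_inter I (by simpa using hI)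
  have edge (a b : Fin (3 * k)) (hab : (a + K).val = b.val) : cross (w a) (w b) p ≤ 0 :=
    Fin.ext hab ▸ Set.mem_iInter₂.1 hp a (mem_univ a)
  refine ⟨p, fun i => mem_convexHull_of_cross_nonpos
    (hw _ _ _ (Fin.mk_lt_mk.2 (by omega)) (Fin.mk_lt_mk.2 (by omega)))
    (edge _ _ ?_) (edge _ _ ?_) (edge _ _ ?_)⟩
  all_goals simp only [Fin.val_add_eq_ite, K]; split_ifs <;> omega
end
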